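/- arXiv:0902.1062 — 6 statements merged into one kernel-verified Lean document; each statement's English description precedes it below -/
import Mathlib

section
/- Let η : Q → Q be an endomorphism of a quasigroup Q, with Bruck decomposition Q = T×E with respect to η, where the injective homomorphism ι : E → Q is written as ι(a) = (γ(a), g(a)) with γ : E → T and g : E → E. Then g is an endomorphism of E and γ(ab) = γ(a) ∇_{g(a),g(b)} γ(b) for all a, b in E. -/
/-- A quasigroup: a set with multiplication and two-sided division operations. -/
structure QuasigroupStruct (α : Type*) where
  mul : α → α → α
  /-- left division: `ld a b = a \ b` -/
  ld : α → α → α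
  /-- right division: `rd a b = a / b` -/
  rd : α → α → α
  mul_ld : ∀ a b, mul a (ld a b) = b
  ld_mul : ∀ a b, ld a (mul a b) = b
  rd_mul : ∀ a b, mul (rd a b) b = a
  mul_rd : ∀ a b, rd (mul a b) b = a

/-- Bruck's construction: the quasigroup `Q(B) = T × E` obtained from a Bruck system,
    with multiplication `(α,a)∘(β,b) = (α ∇_{a,b} β, ab)`. -/
def bruckQG {E T : Type*} (QE : QuasigroupStruct E)
    (F : E → E → QuasigroupStruct T) : QuasigroupStruct (T × E) where
  mul p q := ((F p.2 q.2).mul p.1 q.1, QE.mul p.2 q.2)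
  ld p q := ((F p.2 (QE.ld p.2 q.2)).ld p.1 q.1, QE.ld p.2 q.2)
  rd p q := ((F (QE.rd p.2 q.2) q.2).rd p.1 q.1, QE.rd p.2 q.2)
  mul_ld p q := by
    refine Prod.ext ?_ (QE.mul_ld _ _)
    exact (F p.2 (QE.ld p.2 q.2)).mul_ld _ _
  ld_mul p q := by
    refine Prod.ext ?_ (QE.ld_mul _ _)
    have h : QE.ld p.2 (QE.mul p.2 q.2) = q.2 := QE.ld_mul _ _
    simp only [h]
    exact (F p.2 q.2).ld_mul _ _
  rd_mul p q := by
    refine Prod.ext ?_ (QE.rd_mul _ _)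
    exact (F (QE.rd p.2 q.2) q.2).rd_mul _ _
  mul_rd p q := by
    refine Prod.ext ?_ (QE.mul_rd _ _)
    have h : QE.rd (QE.mul p.2 q.2) q.2 = p.2 := QE.mul_rd _ _
    simp only [h]
    exact (F p.2 q.2).mul_rd _ _

theorem bruckQG_mul_mk {E T : Type*} (QE : QuasigroupStruct E)
    (F : E → E → QuasigroupStruct T) (α β : T) (a b : E) :
    (bruckQG QE F).mul (α, a) (β, b) = ((F a b).mul α β, QE.mul a b) :=
  rfl

theorem stmt3_general {E T : Type*} [Nonempty T] (QE : QuasigroupStruct E)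
    (F : E → E → QuasigroupStruct T) (η : T × E → T × E)
    (hom : ∀ p q, η ((bruckQG QE F).mul p q) = (bruckQG QE F).mul (η p) (η q))
    (γ : E → T) (g : E → E) (hη : ∀ (α : T) (a : E), η (α, a) = (γ a, g a)) :
    (∀ a b, g (QE.mul a b) = QE.mul (g a) (g b)) ∧
      (∀ a b, γ (QE.mul a b) = (F (g a) (g b)).mul (γ a) (γ b)) := by
  obtain ⟨t⟩ := ‹Nonempty T›
  -- `ι a = η (t, a)`, so `ι` inherits multiplicativity from `η`.
  have hι : ∀ a b, (γ (QE.mul a b), g (QE.mul a b)) =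
      ((F (g a) (g b)).mul (γ a) (γ b), QE.mul (g a) (g b)) := fun a b => by
    simpa only [bruckQG_mul_mk, hη] using hom (t, a) (t, b)
  exact ⟨fun a b => congrArg Prod.snd (hι a b), fun a b => congrArg Prod.fst (hι a b)⟩

/-- in the Bruck decomposition of Q = T × E with respect to an endomorphism
    η, with ι(a) = (γ(a), g(a)) injective, g is an endomorphism of E and
    γ(ab) = γ(a) ∇_{g(a),g(b)} γ(b). -/
theorem stmt3 {E T : Type*} [Nonempty T] (QE : QuasigroupStruct E)
    (F : E → E → QuasigroupStruct T) (η : T × E → T × E)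
    (hom : ∀ p q, η ((bruckQG QE F).mul p q) = (bruckQG QE F).mul (η p) (η q))
    (γ : E → T) (g : E → E) (hη : ∀ (α : T) (a : E), η (α, a) = (γ a, g a))
    (hinj : Function.Injective fun a => ((γ a, g a) : T × E)) :
    (∀ a b, g (QE.mul a b) = QE.mul (g a) (g b)) ∧
      (∀ a b, γ (QE.mul a b) = (F (g a) (g b)).mul (γ a) (γ b)) :=
  stmt3_general QE F η hom γ g hη
end

section
/- Let Q be a quasigroup whose left deviation e(x) = x\x is an endomorphism, with Bruck decomposition Q = T×E with respect to e, where e(α,a) = (γ(a), g(a)). Then g(a) = a\a (computed in E) and α ∇_{a, g(a)} γ(a) = α for all α ∈ T, a ∈ E; in particular γ(a) is a right unit element of the quasigroup (T, ∇_{a, a\a}). -/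
@[simp]
theorem bruckQG_ld {E T : Type*} (QE : QuasigroupStruct E) (F : E → E → QuasigroupStruct T)
    (p q : T × E) :
    (bruckQG QE F).ld p q = ((F p.2 (QE.ld p.2 q.2)).ld p.1 q.1, QE.ld p.2 q.2) :=
  rfl

/-- if the left deviation of Q = T × E (Bruck decomposition) is
    e(α,a) = (γ(a), g(a)), then g(a) = a\a and γ(a) is a right unit of (T, ∇_{a,a\a}). -/
theorem stmt7 {E T : Type*} [Nonempty T] (QE : QuasigroupStruct E)
    (F : E → E → QuasigroupStruct T) (γ : E → T) (g : E → E)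
    (hdev : ∀ (α : T) (a : E), (bruckQG QE F).ld (α, a) (α, a) = (γ a, g a)) :
    (∀ a, g a = QE.ld a a) ∧
      (∀ (α : T) (a : E), (F a (g a)).mul α (γ a) = α) ∧
      (∀ (α : T) (a : E), (F a (QE.ld a a)).mul α (γ a) = α) := by
  have hcomp : ∀ (α : T) (a : E), (F a (QE.ld a a)).ld α α = γ a ∧ QE.ld a a = g a :=
    fun α a => Prod.ext_iff.mp ((bruckQG_ld QE F (α, a) (α, a)).symm.trans (hdev α a))
  have hg : ∀ a, g a = QE.ld a a := fun a => (hcomp (Classical.arbitrary T) a).2.symm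
  have hunit : ∀ (α : T) (a : E), (F a (QE.ld a a)).mul α (γ a) = α := by
    intro α a
    rw [← (hcomp α a).1]
    exact (F a _).mul_ld α α
  exact ⟨hg, fun α a => hg a ▸ hunit α a, hunit⟩
end

section
/- Let B = (E, T, (∇_{a,b})_{a,b∈E}) be a Bruck system such that (i) for every a ∈ E the quasigroup (T, ∇_{a, a\a}) has a right unit element ε(a), and (ii) the map a ↦ (ε(a), a\a) : E → Q(B) is a homomorphism. Then the left deviation of Q(B) is an endomorphism, and it is given by e(α,a) = (ε(a), a\a). -/
theorem QuasigroupStruct.ld_eq_of_mul_eq {α : Type*} (Q : QuasigroupStruct α) {a b c : α}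
    (h : Q.mul a c = b) : Q.ld a b = c := by
  rw [← h, Q.ld_mul]

section Bruck

variable {E T : Type*} (QE : QuasigroupStruct E) (F : E → E → QuasigroupStruct T)

theorem bruckQG_mul (p q : T × E) :
    (bruckQG QE F).mul p q = ((F p.2 q.2).mul p.1 q.1, QE.mul p.2 q.2) :=
  rfl

theorem bruckQG_ld_self (α : T) (a : E) :
    (bruckQG QE F).ld (α, a) (α, a) = ((F a (QE.ld a a)).ld α α, QE.ld a a) :=
  rfl

theorem bruckQG_ld_self_eq_of_rightUnit {ε : E → T}
    (hru : ∀ (a : E) (α : T), (F a (QE.ld a a)).mul α (ε a) = α) (α : T) (a : E) :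
    (bruckQG QE F).ld (α, a) (α, a) = (ε a, QE.ld a a) := by
  rw [bruckQG_ld_self, (F a (QE.ld a a)).ld_eq_of_mul_eq (hru a α)]

end Bruck

/-- if in a Bruck system each (T, ∇_{a,a\a}) has a right unit ε(a) and
    a ↦ (ε(a), a\a) is a homomorphism E → Q(B), then the left deviation of Q(B) is an
    endomorphism, given by e(α,a) = (ε(a), a\a). -/
theorem stmt8 {E T : Type*} (QE : QuasigroupStruct E)
    (F : E → E → QuasigroupStruct T) (ε : E → T)
    (hru : ∀ (a : E) (α : T), (F a (QE.ld a a)).mul α (ε a) = α)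
    (hhom : ∀ a b : E,
      ((ε (QE.mul a b), QE.ld (QE.mul a b) (QE.mul a b)) : T × E) =
        (bruckQG QE F).mul (ε a, QE.ld a a) (ε b, QE.ld b b)) :
    (∀ p q : T × E,
        (bruckQG QE F).ld ((bruckQG QE F).mul p q) ((bruckQG QE F).mul p q) =
          (bruckQG QE F).mul ((bruckQG QE F).ld p p) ((bruckQG QE F).ld q q)) ∧
      (∀ (α : T) (a : E), (bruckQG QE F).ld (α, a) (α, a) = (ε a, QE.ld a a)) := by
  have deviation := bruckQG_ld_self_eq_of_rightUnit QE F hru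
  refine ⟨fun ⟨α, a⟩ ⟨β, b⟩ => ?_, deviation⟩
  rw [bruckQG_mul, deviation, deviation, deviation, ← hhom]
end

section
/- Let E, T be quasigroups with a homomorphism ε : E → T such that E is a group with unit 1 and ε(1) is a right unit element of (T,∘). On Q = T×E define ∇_{a,1} by α ∇_{a,1} β = (α/ε(a)) ∘ β (right division in T) and let ∇_{a,b} for b ≠ 1 be arbitrary quasigroup operations on T. Then Q with multiplication (α,a)∘(β,b) = (α ∇_{a,b} β, ab) is a quasigroup whose left deviation is an endomorphism with group image, and e(α,a) = (ε(a), 1). -/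
namespace QuasigroupStruct

variable {α : Type*} (Q : QuasigroupStruct α)

def leftDev (a : α) : α := Q.ld a a

variable {Q}

theorem rd_eq_of_mul_eq {a b c : α} (h : Q.mul a b = c) : Q.rd c b = a :=
  h ▸ Q.mul_rd a b

theorem leftDev_eq_of_mul_eq {a u : α} (h : Q.mul a u = a) : Q.leftDev a = u :=
  (congrArg (Q.ld a) h).symm.trans (Q.ld_mul a u)

end QuasigroupStruct

open QuasigroupStruct

section BruckSystem

variable {E T : Type*} [Group E] {QT : QuasigroupStruct T} {ε : E → T}
  {QE : QuasigroupStruct E} {F : E → E → QuasigroupStruct T}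

theorem leftDev_nabla_one (hF : ∀ a : E, (F a 1).mul = fun α β => QT.mul (QT.rd α (ε a)) β)
    (a : E) (α : T) : (F a 1).leftDev α = ε a :=
  leftDev_eq_of_mul_eq (by rw [hF]; exact QT.rd_mul α (ε a))

theorem bruckQG_leftDev (hQEld : QE.ld = fun a b : E => a⁻¹ * b)
    (hF : ∀ a : E, (F a 1).mul = fun α β => QT.mul (QT.rd α (ε a)) β) (α : T) (a : E) :
    (bruckQG QE F).leftDev (α, a) = (ε a, 1) := by
  have hQEdev : QE.ld a a = 1 := by rw [hQEld]; exact inv_mul_cancel a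
  change ((F a (QE.ld a a)).leftDev α, QE.ld a a) = (ε a, 1)
  rw [hQEdev, leftDev_nabla_one hF]

theorem bruckQG_mul_eps_one (hom : ∀ a b : E, ε (a * b) = QT.mul (ε a) (ε b))
    (hru : ∀ α : T, QT.mul α (ε 1) = α) (hQEmul : QE.mul = fun a b : E => a * b)
    (hF : ∀ a : E, (F a 1).mul = fun α β => QT.mul (QT.rd α (ε a)) β) (a b : E) :
    (bruckQG QE F).mul (ε a, 1) (ε b, 1) = (ε (a * b), 1) := by
  have hrd : QT.rd (ε a) (ε 1) = ε a := rd_eq_of_mul_eq (hru (ε a))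
  change ((F 1 1).mul (ε a) (ε b), QE.mul 1 1) = (ε (a * b), 1)
  rw [hF, hQEmul, hom]
  simp only [hrd, one_mul]

theorem bruckQG_leftDev_mul (hom : ∀ a b : E, ε (a * b) = QT.mul (ε a) (ε b))
    (hru : ∀ α : T, QT.mul α (ε 1) = α) (hQEmul : QE.mul = fun a b : E => a * b)
    (hQEld : QE.ld = fun a b : E => a⁻¹ * b)
    (hF : ∀ a : E, (F a 1).mul = fun α β => QT.mul (QT.rd α (ε a)) β) (p q : T × E) :
    (bruckQG QE F).leftDev ((bruckQG QE F).mul p q) =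
      (bruckQG QE F).mul ((bruckQG QE F).leftDev p) ((bruckQG QE F).leftDev q) := by
  obtain ⟨α, a⟩ := p
  obtain ⟨β, b⟩ := q
  change (bruckQG QE F).leftDev ((F a b).mul α β, QE.mul a b) = _
  rw [bruckQG_leftDev hQEld hF, bruckQG_leftDev hQEld hF, bruckQG_leftDev hQEld hF,
    bruckQG_mul_eps_one hom hru hQEmul hF, hQEmul]

theorem bruckQG_mul_assoc_of_mem_range_leftDev
    (hom : ∀ a b : E, ε (a * b) = QT.mul (ε a) (ε b))
    (hru : ∀ α : T, QT.mul α (ε 1) = α) (hQEmul : QE.mul = fun a b : E => a * b)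
    (hQEld : QE.ld = fun a b : E => a⁻¹ * b)
    (hF : ∀ a : E, (F a 1).mul = fun α β => QT.mul (QT.rd α (ε a)) β) {x y z : T × E}
    (hx : x ∈ Set.range (bruckQG QE F).leftDev) (hy : y ∈ Set.range (bruckQG QE F).leftDev)
    (hz : z ∈ Set.range (bruckQG QE F).leftDev) :
    (bruckQG QE F).mul ((bruckQG QE F).mul x y) z =
      (bruckQG QE F).mul x ((bruckQG QE F).mul y z) := by
  obtain ⟨⟨α, a⟩, rfl⟩ := hx
  obtain ⟨⟨β, b⟩, rfl⟩ := hy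
  obtain ⟨⟨γ, c⟩, rfl⟩ := hz
  simp only [bruckQG_leftDev hQEld hF, bruckQG_mul_eps_one hom hru hQEmul hF, mul_assoc]

end BruckSystem

theorem stmt11_general {E T : Type*} [Group E] (QT : QuasigroupStruct T) (ε : E → T)
    (hom : ∀ a b : E, ε (a * b) = QT.mul (ε a) (ε b))
    (hru : ∀ α : T, QT.mul α (ε 1) = α)
    (QE : QuasigroupStruct E)
    (hQEmul : QE.mul = fun a b : E => a * b)
    (hQEld : QE.ld = fun a b : E => a⁻¹ * b)
    (F : E → E → QuasigroupStruct T)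
    (hF : ∀ a : E, (F a 1).mul = fun α β => QT.mul (QT.rd α (ε a)) β) :
    (∀ (α : T) (a : E), (bruckQG QE F).ld (α, a) (α, a) = (ε a, 1)) ∧
      (∀ p q : T × E,
        (bruckQG QE F).ld ((bruckQG QE F).mul p q) ((bruckQG QE F).mul p q) =
          (bruckQG QE F).mul ((bruckQG QE F).ld p p) ((bruckQG QE F).ld q q)) ∧
      (∀ x y z : T × E,
        x ∈ Set.range (fun w => (bruckQG QE F).ld w w) →
        y ∈ Set.range (fun w => (bruckQG QE F).ld w w) →
        z ∈ Set.range (fun w => (bruckQG QE F).ld w w) →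
        (bruckQG QE F).mul ((bruckQG QE F).mul x y) z =
          (bruckQG QE F).mul x ((bruckQG QE F).mul y z)) :=
  ⟨bruckQG_leftDev hQEld hF, bruckQG_leftDev_mul hom hru hQEmul hQEld hF,
    fun _ _ _ => bruckQG_mul_assoc_of_mem_range_leftDev hom hru hQEmul hQEld hF⟩

/-- with E a group, ε : E → T a homomorphism into a quasigroup T whose
    right unit is ε(1), and ∇_{a,1} given by α ∇_{a,1} β = (α/ε(a))∘β (the other ∇_{a,b}
    arbitrary), the Bruck quasigroup Q = T × E has left deviation e(α,a) = (ε(a),1),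
    which is an endomorphism with group (associative) image. -/
theorem stmt11 {E T : Type*} [Group E] (QT : QuasigroupStruct T) (ε : E → T)
    (hom : ∀ a b : E, ε (a * b) = QT.mul (ε a) (ε b))
    (hru : ∀ α : T, QT.mul α (ε 1) = α)
    (QE : QuasigroupStruct E)
    (hQEmul : QE.mul = fun a b : E => a * b)
    (hQEld : QE.ld = fun a b : E => a⁻¹ * b)
    (hQErd : QE.rd = fun a b : E => a * b⁻¹)
    (F : E → E → QuasigroupStruct T)
    (hF : ∀ a : E, (F a 1).mul = fun α β => QT.mul (QT.rd α (ε a)) β) :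
    (∀ (α : T) (a : E), (bruckQG QE F).ld (α, a) (α, a) = (ε a, 1)) ∧
      (∀ p q : T × E,
        (bruckQG QE F).ld ((bruckQG QE F).mul p q) ((bruckQG QE F).mul p q) =
          (bruckQG QE F).mul ((bruckQG QE F).ld p p) ((bruckQG QE F).ld q q)) ∧
      (∀ x y z : T × E,
        x ∈ Set.range (fun w => (bruckQG QE F).ld w w) →
        y ∈ Set.range (fun w => (bruckQG QE F).ld w w) →
        z ∈ Set.range (fun w => (bruckQG QE F).ld w w) →
        (bruckQG QE F).mul ((bruckQG QE F).mul x y) z =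
          (bruckQG QE F).mul x ((bruckQG QE F).mul y z)) :=
  stmt11_general QT ε hom hru QE hQEmul hQEld F hF
end

section
/- Every LF-quasigroup Q satisfies: the left deviation e(x) = x\x is an endomorphism of Q, i.e., (xy)\(xy) = (x\x)·(y\y) for all x,y. -/
namespace QuasigroupStruct

variable {Q : Type*} (G : QuasigroupStruct Q)

theorem ld_self_eq_of_mul_eq_self {a b : Q} (h : G.mul a b = a) : G.ld a a = b := by
  nth_rw 2 [← h]
  exact G.ld_mul a b

end QuasigroupStruct

/-- in every LF-quasigroup (x·(yz) = (xy)·((x\x)·z)) the left deviation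
    e(x) = x\x is an endomorphism: (xy)\(xy) = (x\x)·(y\y). -/
theorem stmt12 {Q : Type*} (G : QuasigroupStruct Q)
    (LF : ∀ x y z, G.mul x (G.mul y z) = G.mul (G.mul x y) (G.mul (G.ld x x) z)) :
    ∀ x y, G.ld (G.mul x y) (G.mul x y) = G.mul (G.ld x x) (G.ld y y) := by
  intro x y
  -- LF at z = y\y has left side x·(y·(y\y)) = xy.
  refine G.ld_self_eq_of_mul_eq_self ?_
  rw [← LF, G.mul_ld]
end

section
/- Let E and T be groups and ε : E → T a group homomorphism, and let Q = T×E with multiplication (α,a)∘(β,b) = (α·ε(a)⁻¹·β, ab). Then Q is an LF-quasigroup, i.e., it satisfies x∘(y∘z) = (x∘y)∘(e(x)∘z) where e(x) = x\x, and explicitly e(α,a) = (ε(a),1). -/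
/-!
Both sides of the left-distributive law expand to `(α ε(a)⁻¹ β ε(b)⁻¹ γ, a b c)`: on the right
the factor `e(x) = (ε a, 1)` supplies the `ε(a)` that turns `ε(a b)⁻¹` into `ε(b)⁻¹`.
-/

namespace LFQuasigroup

variable {E T : Type*} [Group E] [Group T] (ε : E →* T)

def lfMul (p q : T × E) : T × E := (p.1 * (ε p.2)⁻¹ * q.1, p.2 * q.2)

def lfLeftDiv (p q : T × E) : T × E := (ε p.2 * p.1⁻¹ * q.1, p.2⁻¹ * q.2)

theorem lfMul_lfLeftDiv (p q : T × E) : lfMul ε p (lfLeftDiv ε p q) = q := by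
  ext <;> simp [lfMul, lfLeftDiv, mul_assoc]

theorem lfLeftDiv_lfMul (p q : T × E) : lfLeftDiv ε p (lfMul ε p q) = q := by
  ext <;> simp [lfMul, lfLeftDiv, mul_assoc]

theorem lfLeftDiv_self (α : T) (a : E) : lfLeftDiv ε (α, a) (α, a) = (ε a, 1) := by
  ext <;> simp [lfLeftDiv]

theorem lfMul_lfMul_eq (x y z : T × E) :
    lfMul ε x (lfMul ε y z) = (x.1 * (ε x.2)⁻¹ * y.1 * (ε y.2)⁻¹ * z.1, x.2 * y.2 * z.2) := by
  ext <;> simp [lfMul, mul_assoc]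

theorem lfMul_left_distrib (x y z : T × E) :
    lfMul ε x (lfMul ε y z) = lfMul ε (lfMul ε x y) (lfMul ε (lfLeftDiv ε x x) z) := by
  obtain ⟨α, a⟩ := x
  have hε : (ε (a * y.2))⁻¹ * ε a = (ε y.2)⁻¹ := by
    rw [map_mul, mul_inv_rev, inv_mul_cancel_right]
  rw [lfMul_lfMul_eq, lfLeftDiv_self]
  ext
  · simp only [lfMul, map_one, inv_one, mul_one, mul_assoc, ← hε]
  · simp [lfMul, mul_assoc]

end LFQuasigroup

/-- Q = T × E with (α,a)∘(β,b) = (α·ε(a)⁻¹·β, ab) is an LF-quasigroup: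
    its left division is (α,a)\(β,b) = (ε(a)·α⁻¹·β, a⁻¹b), its left deviation is
    e(α,a) = (ε(a),1), and x∘(y∘z) = (x∘y)∘(e(x)∘z) holds. -/
theorem stmt14 {E T : Type*} [Group E] [Group T] (ε : E →* T)
    (m ld : T × E → T × E → T × E)
    (hm : m = fun p q => (p.1 * (ε p.2)⁻¹ * q.1, p.2 * q.2))
    (hld : ld = fun p q => (ε p.2 * p.1⁻¹ * q.1, p.2⁻¹ * q.2)) :
    (∀ x y, m x (ld x y) = y) ∧ (∀ x y, ld x (m x y) = y) ∧
      (∀ x y z, m x (m y z) = m (m x y) (m (ld x x) z)) ∧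
      (∀ (α : T) (a : E), ld (α, a) (α, a) = ((ε a : T), (1 : E))) := by
  change m = LFQuasigroup.lfMul ε at hm
  change ld = LFQuasigroup.lfLeftDiv ε at hld
  subst hm hld
  exact ⟨LFQuasigroup.lfMul_lfLeftDiv ε, LFQuasigroup.lfLeftDiv_lfMul ε,
    LFQuasigroup.lfMul_left_distrib ε, LFQuasigroup.lfLeftDiv_self ε⟩
end
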